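/- Let c be a monotone stateless emptier on n cups. For every state S and every cup j' ≠ c(S), the pair (c(S), S(c(S))) dominates (j', S(j')). -/

import Mathlib

/-- A state of `n` cups: each fill is a nonnegative integer multiple of `1/2`. -/
def HalfState (n : ℕ) (S : Fin n → ℝ) : Prop := ∀ i, ∃ k : ℕ, S i = (k : ℝ) / 2

/-- A stateless emptier `c` is monotone if whenever `c S = j` and `S'` agrees with `S`
except that the fill of a single cup `i ≠ j` has been reduced, then `c S' = j`. -/
def MonotoneEmptier (n : ℕ) (c : (Fin n → ℝ) → Fin n) : Prop :=
  ∀ S S' : Fin n → ℝ, HalfState n S → HalfState n S' →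
    ∀ i : Fin n, i ≠ c S → S' i ≤ S i → (∀ j, j ≠ i → S' j = S j) → c S' = c S

/-- The state in which cup `j₁` has fill `r₁`, cup `j₂` has fill `r₂`, and all other
cups are empty. -/
def twoCup (n : ℕ) (j₁ j₂ : Fin n) (r₁ r₂ : ℝ) : Fin n → ℝ :=
  fun k => if k = j₁ then r₁ else if k = j₂ then r₂ else 0

/-- `(j₁, r₁)` dominates `(j₂, r₂)`: for `j₁ ≠ j₂`, the emptier selects `j₁` in the state
where only `j₁` and `j₂` are nonempty with fills `r₁`, `r₂`; for `j₁ = j₂`, `r₁ > r₂`. -/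
def Dominates (n : ℕ) (c : (Fin n → ℝ) → Fin n)
    (j₁ : Fin n) (r₁ : ℝ) (j₂ : Fin n) (r₂ : ℝ) : Prop :=
  if j₁ = j₂ then r₂ < r₁ else c (twoCup n j₁ j₂ r₁ r₂) = j₁

/-! Emptying every cup other than `c S` and `j'`, one cup at a time, never touches the
selected cup, so by monotonicity the selection survives each step and the two-cup state
still selects `c S`. -/

namespace HalfState

variable {n : ℕ} {S S' : Fin n → ℝ}

lemma nonneg (hS : HalfState n S) (i : Fin n) : 0 ≤ S i := by
  obtain ⟨k, hk⟩ := hS i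
  rw [hk]
  positivity

lemma piecewise (hS' : HalfState n S') (hS : HalfState n S) (T : Finset (Fin n)) :
    HalfState n (T.piecewise S' S) := by
  intro i
  by_cases hi : i ∈ T
  · simpa only [Finset.piecewise_eq_of_mem _ _ _ hi] using hS' i
  · simpa only [Finset.piecewise_eq_of_notMem _ _ _ hi] using hS i

lemma twoCup (hS : HalfState n S) (j₁ j₂ : Fin n) :
    HalfState n (twoCup n j₁ j₂ (S j₁) (S j₂)) := by
  intro k
  unfold _root_.twoCup
  split_ifs with h₁ h₂
  · exact h₁ ▸ hS j₁
  · exact h₂ ▸ hS j₂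
  · exact ⟨0, by simp⟩

end HalfState

namespace MonotoneEmptier

variable {n : ℕ} {c : (Fin n → ℝ) → Fin n} {S S' : Fin n → ℝ}

lemma apply_piecewise_eq (hmono : MonotoneEmptier n c) (hS : HalfState n S)
    (hS' : HalfState n S') (hle : ∀ i, S' i ≤ S i) (T : Finset (Fin n)) (hT : c S ∉ T) :
    c (T.piecewise S' S) = c S := by
  induction T using Finset.induction_on with
  | empty => rw [Finset.piecewise_empty]
  | @insert a T haT ih =>
    have ih := ih fun h => hT (Finset.mem_insert_of_mem h)
    have hac : a ≠ c (T.piecewise S' S) := ih ▸ fun h => hT (h ▸ Finset.mem_insert_self a T)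
    rw [← ih]
    refine hmono _ _ (hS'.piecewise hS T) (hS'.piecewise hS _) a hac ?_ ?_
    · simp only [Finset.piecewise_insert_self, Finset.piecewise_eq_of_notMem _ _ _ haT, hle]
    · intro j hj
      exact Finset.piecewise_insert_of_ne _ _ _ hj

lemma apply_eq_of_le (hmono : MonotoneEmptier n c) (hS : HalfState n S)
    (hS' : HalfState n S') (hle : ∀ i, S' i ≤ S i) (hsel : S' (c S) = S (c S)) :
    c S' = c S := by
  have hT : c S ∉ Finset.univ.erase (c S) := Finset.notMem_erase _ _
  convert hmono.apply_piecewise_eq hS hS' hle _ hT using 2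
  ext i
  by_cases hi : i = c S
  · rw [Finset.piecewise_eq_of_notMem _ _ _ (hi ▸ hT), hi, hsel]
  · rw [Finset.piecewise_eq_of_mem _ _ _ (Finset.mem_erase.2 ⟨hi, Finset.mem_univ i⟩)]

end MonotoneEmptier

lemma twoCup_le {n : ℕ} {S : Fin n → ℝ} (hS : HalfState n S) (j₁ j₂ k : Fin n) :
    twoCup n j₁ j₂ (S j₁) (S j₂) k ≤ S k := by
  unfold twoCup
  split_ifs with h₁ h₂
  · rw [h₁]
  · rw [h₂]
  · exact hS.nonneg k

/-- For a monotone stateless emptier, the selected cup dominates every other cup. -/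
theorem stmt_5 (n : ℕ) (c : (Fin n → ℝ) → Fin n) (hmono : MonotoneEmptier n c) :
    ∀ S : Fin n → ℝ, HalfState n S → ∀ j' : Fin n, j' ≠ c S →
      Dominates n c (c S) (S (c S)) j' (S j') := by
  intro S hS j' hj'
  rw [Dominates, if_neg hj'.symm]
  exact hmono.apply_eq_of_le hS (hS.twoCup _ _) (twoCup_le hS _ _) (by simp [twoCup])
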